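/- Assume the correlators satisfy the string equation and the genus-0 topological recursion relation (TRR0). Fix k_1, k_2 ∈ ℕ and a_1, a_2 ∈ A and define Φ = ∑_{N≥0} (1/N!) ∑_{b_1,…,b_N∈A} u^{b_1}⋯u^{b_N} · ⟨τ_{k_1}(γ_{a_1})τ_{k_2}(γ_{a_2})τ_0(γ_{b_1})⋯τ_0(γ_{b_N})⟩_0 ∈ R (well-defined because each u^b has zero constant term). Then for every b ∈ A and every integer n ≥ 1, ∂Φ/∂t^b_n = ∑_{c,d∈A} ⟨⟨τ_{n−1}(γ_b)γ_c⟩⟩_0 · η^{cd} · ∂Φ/∂t^d_0 in R. -/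

import Mathlib

open MvPowerSeries

/-- The coefficientwise partial derivative `∂/∂t_s` on multivariate formal power series. -/
noncomputable def pderivPS {σ : Type*} {K : Type*} [CommSemiring K] (s : σ)
    (f : MvPowerSeries σ K) : MvPowerSeries σ K :=
  fun d => (d s + 1) • MvPowerSeries.coeff (d + Finsupp.single s 1) f

/-- Membership in the (completed) ideal `J ⊆ K[[t^a_k]]` generated by the variables
`t^a_k` with `k ≥ 1`: a formal power series lies in `J` iff its coefficient at every
monomial involving only the variables `t^a_0` vanishes. -/
def memJ {K : Type*} [CommSemiring K] {A : Type*} (f : MvPowerSeries (A × ℕ) K) : Prop :=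
  ∀ d : (A × ℕ) →₀ ℕ, (∀ p ∈ d.support, p.2 = 0) → MvPowerSeries.coeff d f = 0

/-- The generating series `⟨⟨X⟩⟩` of a correlator `C` (a symmetric function of its
insertions, modelled as a function of a multiset of pairs `(a, k)`, the pair `(a, k)`
standing for `τ_k(γ_a)`). -/
noncomputable def gen {K : Type*} [CommRing K] [Algebra ℚ K] {A : Type*}
    (C : Multiset (A × ℕ) → K) (X : Multiset (A × ℕ)) : MvPowerSeries (A × ℕ) K :=
  fun d => (((∏ s ∈ d.support, (d s).factorial : ℕ) : ℚ))⁻¹ • C (X + Finsupp.toMultiset d)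

/-- `u^a = ⟨⟨P γ^a⟩⟩₀`, where `P = γ_{a₀}` and `γ^a = ∑_b η^{ab} γ_b`. -/
noncomputable def uSeries {K : Type*} [CommRing K] [Algebra ℚ K] {A : Type*} [Fintype A]
    (C0 : Multiset (A × ℕ) → K) (ηinv : A → A → K) (P : A) (a : A) :
    MvPowerSeries (A × ℕ) K :=
  ∑ b : A, ηinv a b • gen C0 {(P, 0), (b, 0)}

/-- The right hand side of the string equation: `∑_{i : k_i ≥ 1} ⟨⋯ τ_{k_i−1}(γ_{a_i}) ⋯⟩`. -/
def stringRHS {K : Type*} [CommRing K] {A : Type*} [DecidableEq A]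
    (C : Multiset (A × ℕ) → K) (X : Multiset (A × ℕ)) : K :=
  (X.map fun p => if 1 ≤ p.2 then C ((p.1, p.2 - 1) ::ₘ X.erase p) else 0).sum

/-- The string equation for the genus-0 correlators, with the exceptional case
`n = 2`, `k_1 = k_2 = 0` where the right-hand side is `η_{a₁a₂}`. -/
def StringEq0 {K : Type*} [CommRing K] {A : Type*} [DecidableEq A]
    (P : A) (η : A → A → K) (C0 : Multiset (A × ℕ) → K) : Prop :=
  (∀ a b : A, C0 {(P, 0), (a, 0), (b, 0)} = η a b) ∧
  ∀ X : Multiset (A × ℕ), (∀ a b : A, X ≠ {(a, 0), (b, 0)}) →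
    C0 ((P, 0) ::ₘ X) = stringRHS C0 X

/-- The string equation for the genus-1 correlators. -/
def StringEq1 {K : Type*} [CommRing K] {A : Type*} [DecidableEq A]
    (P : A) (C1 : Multiset (A × ℕ) → K) : Prop :=
  ∀ X : Multiset (A × ℕ), C1 ((P, 0) ::ₘ X) = stringRHS C1 X

/-- The genus-0 topological recursion relation (TRR0). -/
def TRR0 {K : Type*} [CommRing K] [Algebra ℚ K] {A : Type*} [Fintype A]
    (ηinv : A → A → K) (C0 : Multiset (A × ℕ) → K) : Prop :=
  ∀ (k1 k2 k3 : ℕ) (a1 a2 a3 : A), 1 ≤ k1 →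
    gen C0 {(a1, k1), (a2, k2), (a3, k3)} =
      ∑ a : A, ∑ b : A, ηinv a b •
        (gen C0 {(a1, k1 - 1), (a, 0)} * gen C0 {(b, 0), (a2, k2), (a3, k3)})

/-- The genus-1 topological recursion relation (TRR1). -/
def TRR1 {K : Type*} [CommRing K] [Algebra ℚ K] {A : Type*} [Fintype A]
    (ηinv : A → A → K) (C0 C1 : Multiset (A × ℕ) → K) : Prop :=
  ∀ (k : ℕ) (a0 : A), 1 ≤ k →
    gen C1 {(a0, k)} =
      (∑ a : A, ∑ b : A, ηinv a b • (gen C0 {(a0, k - 1), (a, 0)} * gen C1 {(b, 0)})) +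
      (1 / 24 : ℚ) • ∑ a : A, ∑ b : A, ηinv a b • gen C0 {(a0, k - 1), (a, 0), (b, 0)}

/-- The matrix `M_a^b = ∂u^b/∂t^a_0`. -/
noncomputable def Mmat {K : Type*} [CommRing K] [Algebra ℚ K] {A : Type*} [Fintype A]
    (C0 : Multiset (A × ℕ) → K) (ηinv : A → A → K) (P : A) :
    Matrix A A (MvPowerSeries (A × ℕ) K) :=
  Matrix.of fun a b => pderivPS (a, 0) (uSeries C0 ηinv P b)

/-- `Φ = ∑_N (1/N!) ∑_{b₁,…,b_N} u^{b₁}⋯u^{b_N}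
⟨τ_{k₁}(γ_{a₁})τ_{k₂}(γ_{a₂})τ_0(γ_{b₁})⋯τ_0(γ_{b_N})⟩₀ ∈ R`, defined coefficientwise:
since each `u^b` has zero constant term, the coefficient at a monomial `d` only receives
contributions from `N ≤ deg d`, so the sum over `N` may be truncated there. -/
noncomputable def PhiDW {K : Type*} [CommRing K] [Algebra ℚ K] {A : Type*} [Fintype A]
    (C0 : Multiset (A × ℕ) → K) (ηinv : A → A → K) (P : A)
    (k1 k2 : ℕ) (a1 a2 : A) : MvPowerSeries (A × ℕ) K :=
  fun d => MvPowerSeries.coeff d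
    (∑ N ∈ Finset.range (d.sum (fun _ m => m) + 1),
      (N.factorial : ℚ)⁻¹ •
        ∑ b : Fin N → A,
          C0 ({(a1, k1), (a2, k2)} + Multiset.map (fun i => (b i, 0)) Finset.univ.val) •
            ∏ i, uSeries C0 ηinv P (b i))

/-! ### Auxiliary lemmas -/

section PderivBasic
variable {σ : Type*} {K : Type*} [CommSemiring K] (s : σ)

theorem coeff_pderivPS (f : MvPowerSeries σ K) (d : σ →₀ ℕ) :
    MvPowerSeries.coeff d (pderivPS s f) =
      (d s + 1) • MvPowerSeries.coeff (d + Finsupp.single s 1) f := rfl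

theorem pderivPS_add (f g : MvPowerSeries σ K) :
    pderivPS s (f + g) = pderivPS s f + pderivPS s g := by
  ext d; simp [coeff_pderivPS, map_add, smul_add]

theorem pderivPS_sum {ι : Type*} (t : Finset ι) (f : ι → MvPowerSeries σ K) :
    pderivPS s (∑ i ∈ t, f i) = ∑ i ∈ t, pderivPS s (f i) := by
  ext d; simp [coeff_pderivPS, Finset.smul_sum]

theorem coeff_smul'PS {M : Type*} [Semiring M] [Module M K] (m : M) (f : MvPowerSeries σ K)
    (d : σ →₀ ℕ) : MvPowerSeries.coeff d (m • f) = m • MvPowerSeries.coeff d f := rfl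

theorem pderivPS_smul {M : Type*} [Semiring M] [Module M K] [SMulCommClass M K K]
    (m : M) (f : MvPowerSeries σ K) :
    pderivPS s (m • f) = m • pderivPS s f := by
  ext d
  rw [coeff_pderivPS, coeff_smul'PS, coeff_smul'PS, coeff_pderivPS, smul_comm]

theorem pderivPS_one : pderivPS s (1 : MvPowerSeries σ K) = 0 := by
  classical
  ext d
  have h : ¬(d + Finsupp.single s 1 = 0) := by
    intro h
    have := DFunLike.congr_fun h s
    simp [Finsupp.single_apply] at this
  simp [coeff_pderivPS, MvPowerSeries.coeff_one, h]

theorem pderivPS_mul (f g : MvPowerSeries σ K) :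
    pderivPS s (f * g) = pderivPS s f * g + f * pderivPS s g := by
  classical
  ext d
  set δ : σ →₀ ℕ := Finsupp.single s 1 with hδ
  have key : ∀ (F G : MvPowerSeries σ K),
      (∑ p ∈ Finset.HasAntidiagonal.antidiagonal (d + δ), (p.1 s) •
        (MvPowerSeries.coeff p.1 F * MvPowerSeries.coeff p.2 G)) =
      ∑ q ∈ Finset.HasAntidiagonal.antidiagonal d,
        ((q.1 s + 1) • MvPowerSeries.coeff (q.1 + δ) F) * MvPowerSeries.coeff q.2 G := by
    intro F G
    rw [← Finset.sum_filter_of_ne (p := fun p => δ ≤ p.1)]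
    · refine Finset.sum_nbij' (fun p => (p.1 - δ, p.2)) (fun q => (q.1 + δ, q.2)) ?_ ?_ ?_ ?_ ?_
      · intro p hp
        simp only [Finset.mem_filter, Finset.HasAntidiagonal.mem_antidiagonal] at hp
        rw [Finset.HasAntidiagonal.mem_antidiagonal]
        have := hp.1
        ext a
        have h1 := DFunLike.congr_fun this a
        have h2 := hp.2 a
        simp only [Finsupp.add_apply, Finsupp.coe_add, Finsupp.coe_tsub, Pi.add_apply,
          Pi.sub_apply, Finsupp.tsub_apply] at h1 h2 ⊢
        omega
      · intro q hq
        rw [Finset.HasAntidiagonal.mem_antidiagonal] at hq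
        simp only [Finset.mem_filter, Finset.HasAntidiagonal.mem_antidiagonal]
        constructor
        · rw [← hq]; ext a; simp only [Finsupp.add_apply]; ring
        · exact le_add_self.trans_eq rfl
      · intro p hp
        simp only [Finset.mem_filter] at hp
        simp [tsub_add_cancel_of_le hp.2]
      · intro q hq; simp
      · intro p hp
        simp only [Finset.mem_filter] at hp
        have h1 : p.1 - δ + δ = p.1 := tsub_add_cancel_of_le hp.2
        have h2 : (p.1 - δ) s + 1 = p.1 s := by
          have hle := hp.2
          rw [Finsupp.le_def] at hle
          have h3 := hle s
          simp only [Finsupp.tsub_apply, hδ, Finsupp.single_eq_same] at h3 ⊢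
          omega
        rw [h1, h2, smul_mul_assoc]
    · intro p hp hne
      by_contra hle
      have : p.1 s = 0 := by
        have := Finsupp.single_le_iff.not.mp hle
        omega
      rw [this, zero_smul] at hne
      exact hne rfl
  have hds : ∀ p ∈ Finset.HasAntidiagonal.antidiagonal (d + δ), d s + 1 = p.1 s + p.2 s := by
    intro p hp
    rw [Finset.HasAntidiagonal.mem_antidiagonal] at hp
    have := DFunLike.congr_fun hp s
    simp only [Finsupp.add_apply, hδ, Finsupp.single_eq_same] at this
    omega
  rw [map_add, coeff_pderivPS, MvPowerSeries.coeff_mul, MvPowerSeries.coeff_mul,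
    MvPowerSeries.coeff_mul, Finset.smul_sum]
  calc ∑ p ∈ Finset.HasAntidiagonal.antidiagonal (d + δ), (d s + 1) •
        (MvPowerSeries.coeff p.1 f * MvPowerSeries.coeff p.2 g)
      = ∑ p ∈ Finset.HasAntidiagonal.antidiagonal (d + δ),
          ((p.1 s) • (MvPowerSeries.coeff p.1 f * MvPowerSeries.coeff p.2 g) +
           (p.2 s) • (MvPowerSeries.coeff p.1 f * MvPowerSeries.coeff p.2 g)) := by
        refine Finset.sum_congr rfl fun p hp => ?_
        rw [← add_smul, ← hds p hp]
    _ = _ := by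
        rw [Finset.sum_add_distrib]
        congr 1
        · exact key f g
        · have : ∀ p : (σ →₀ ℕ) × (σ →₀ ℕ), (p.2 s) •
              (MvPowerSeries.coeff p.1 f * MvPowerSeries.coeff p.2 g) =
              (p.2 s) • (MvPowerSeries.coeff p.2 g * MvPowerSeries.coeff p.1 f) := by
            intro p; rw [mul_comm]
          rw [Finset.sum_congr rfl fun p _ => this p]
          have swap : ∑ p ∈ Finset.HasAntidiagonal.antidiagonal (d + δ), (p.2 s) •
              (MvPowerSeries.coeff p.2 g * MvPowerSeries.coeff p.1 f) =
              ∑ p ∈ Finset.HasAntidiagonal.antidiagonal (d + δ), (p.1 s) •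
              (MvPowerSeries.coeff p.1 g * MvPowerSeries.coeff p.2 f) := by
            apply Finset.sum_nbij' (fun p => (p.2, p.1)) (fun p => (p.2, p.1)) <;>
              simp [Finset.HasAntidiagonal.mem_antidiagonal, add_comm]
          rw [swap, key g f]
          refine Finset.sum_nbij' (fun q => (q.2, q.1)) (fun q => (q.2, q.1)) ?_ ?_ ?_ ?_ ?_
          · intro q hq; rw [Finset.HasAntidiagonal.mem_antidiagonal] at hq ⊢; rw [← hq]; apply add_comm
          · intro q hq; rw [Finset.HasAntidiagonal.mem_antidiagonal] at hq ⊢; rw [← hq]; apply add_comm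
          · intro q _; rfl
          · intro q _; rfl
          · intro q hq
            rw [coeff_pderivPS, mul_comm]

end PderivBasic

section GenLemmas
variable {K : Type*} [CommRing K] [Algebra ℚ K] {A : Type*}

theorem coeff_gen (C : Multiset (A × ℕ) → K) (X : Multiset (A × ℕ)) (d : (A × ℕ) →₀ ℕ) :
    MvPowerSeries.coeff d (gen C X) =
      (((∏ s ∈ d.support, (d s).factorial : ℕ) : ℚ))⁻¹ • C (X + Finsupp.toMultiset d) := rfl

theorem pderivPS_gen (C : Multiset (A × ℕ) → K) (X : Multiset (A × ℕ)) (s : A × ℕ) :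
    pderivPS s (gen C X) = gen C (s ::ₘ X) := by
  classical
  ext d
  rw [coeff_pderivPS, coeff_gen, coeff_gen]
  set δ : (A × ℕ) →₀ ℕ := Finsupp.single s 1 with hδ
  have hmult : X + Finsupp.toMultiset (d + δ) = (s ::ₘ X) + Finsupp.toMultiset d := by
    rw [Finsupp.toMultiset_add, hδ, Finsupp.toMultiset_single, one_nsmul,
      ← Multiset.singleton_add]
    abel
  rw [hmult]
  set U : Finset (A × ℕ) := insert s d.support with hU
  have hsub1 : (d + δ).support ⊆ U := by
    intro p hp
    rcases eq_or_ne p s with h | h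
    · exact h ▸ Finset.mem_insert_self s _
    · apply Finset.mem_insert_of_mem
      rw [Finsupp.mem_support_iff] at hp ⊢
      intro h0
      apply hp
      rw [Finsupp.add_apply, h0, hδ, Finsupp.single_apply, if_neg (fun hh => h hh.symm), add_zero]
  have hsub2 : d.support ⊆ U := Finset.subset_insert _ _
  have hQ1 : (∏ p ∈ (d + δ).support, ((d + δ) p).factorial) =
      ∏ p ∈ U, ((d + δ) p).factorial := by
    refine Finset.prod_subset hsub1 fun p _ hp => ?_
    rw [Finsupp.notMem_support_iff.mp hp, Nat.factorial_zero]
  have hQ2 : (∏ p ∈ d.support, (d p).factorial) = ∏ p ∈ U, (d p).factorial := by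
    refine Finset.prod_subset hsub2 fun p _ hp => ?_
    rw [Finsupp.notMem_support_iff.mp hp, Nat.factorial_zero]
  have hsU : s ∈ U := Finset.mem_insert_self s _
  have hW1 : ∏ p ∈ U, ((d + δ) p).factorial =
      (d s + 1).factorial * ∏ p ∈ U.erase s, (d p).factorial := by
    rw [← Finset.mul_prod_erase U (fun p => ((d + δ) p).factorial) hsU]
    congr 1
    · congr 1
      rw [Finsupp.add_apply, hδ, Finsupp.single_eq_same]
    · refine Finset.prod_congr rfl fun p hp => ?_
      congr 1
      rw [Finsupp.add_apply, hδ, Finsupp.single_apply,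
        if_neg (fun hh => (Finset.ne_of_mem_erase hp) hh.symm), add_zero]
  have hW2 : ∏ p ∈ U, (d p).factorial =
      (d s).factorial * ∏ p ∈ U.erase s, (d p).factorial :=
    (Finset.mul_prod_erase U (fun p => (d p).factorial) hsU).symm
  rw [hQ1, hQ2, hW1, hW2]
  set W : ℕ := ∏ p ∈ U.erase s, (d p).factorial with hWdef
  have hQ : ((d s + 1 : ℕ) : ℚ) * (((d s + 1).factorial * W : ℕ) : ℚ)⁻¹ =
      (((d s).factorial * W : ℕ) : ℚ)⁻¹ := by
    have hWne : (W : ℚ) ≠ 0 := Nat.cast_ne_zero.mpr (by positivity)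
    have hfne : ((d s).factorial : ℚ) ≠ 0 := Nat.cast_ne_zero.mpr (Nat.factorial_ne_zero _)
    rw [Nat.factorial_succ]
    push_cast
    field_simp
  rw [← Nat.cast_smul_eq_nsmul ℚ (d s + 1), smul_smul]
  push_cast
  rw_mod_cast [hQ]

end GenLemmas

section Deg
variable {A : Type*}

/-- Total degree of an exponent. -/
def degd (d : (A × ℕ) →₀ ℕ) : ℕ := d.sum fun _ m => m

theorem degd_add (u v : (A × ℕ) →₀ ℕ) : degd (u + v) = degd u + degd v :=
  Finsupp.sum_add_index' (fun _ => rfl) (fun _ _ _ => rfl)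

theorem degd_eq_zero {d : (A × ℕ) →₀ ℕ} (h : degd d = 0) : d = 0 := by
  ext a
  by_contra ha
  have hmem : a ∈ d.support := Finsupp.mem_support_iff.mpr (by simpa using ha)
  have := Finset.sum_eq_zero_iff.mp h a hmem
  exact ha (by simpa using this)

theorem degd_single (s : A × ℕ) : degd (Finsupp.single s 1) = 1 := by
  simp [degd, Finsupp.sum_single_index]

theorem degd_mono {u d : (A × ℕ) →₀ ℕ} (h : u ≤ d) : degd u ≤ degd d := by
  obtain ⟨c, rfl⟩ := le_iff_exists_add.mp h
  rw [degd_add]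
  omega

end Deg

theorem coeff_prod_eq_zero {K : Type*} [CommRing K] {A : Type*} :
    ∀ (N : ℕ) (f : Fin N → MvPowerSeries (A × ℕ) K),
      (∀ i, MvPowerSeries.coeff 0 (f i) = 0) →
      ∀ d : (A × ℕ) →₀ ℕ, degd d < N → MvPowerSeries.coeff d (∏ i, f i) = 0 := by
  intro N
  induction N with
  | zero => intro f _ d hd; omega
  | succ N ih =>
    intro f hf d hd
    classical
    rw [Fin.prod_univ_succ, MvPowerSeries.coeff_mul]
    refine Finset.sum_eq_zero fun p hp => ?_
    rw [Finset.HasAntidiagonal.mem_antidiagonal] at hp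
    rcases eq_or_ne p.1 0 with h | h
    · rw [h, hf 0, zero_mul]
    · have h1 : 1 ≤ degd p.1 := by
        rcases Nat.eq_zero_or_pos (degd p.1) with h0 | h0
        · exact absurd (degd_eq_zero h0) h
        · exact h0
      have h2 : degd p.2 < N := by
        have := degd_add p.1 p.2
        rw [hp] at this
        omega
      rw [ih (fun i => f i.succ) (fun i => hf i.succ) p.2 h2, mul_zero]

theorem multiset_map_univ_succ {β : Type*} {N : ℕ} (g : Fin (N + 1) → β) :
    Multiset.map g Finset.univ.val =
      g 0 ::ₘ Multiset.map (fun i : Fin N => g i.succ) Finset.univ.val := by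
  rw [Fin.univ_succ, Finset.cons_val, Multiset.map_cons, Finset.map_val, Multiset.map_map]
  rfl

section DW
variable {K : Type*} [CommRing K] [Algebra ℚ K] {A : Type*} [Fintype A] [DecidableEq A]

theorem twopoint_eq_zero {P : A} {η : A → A → K} {C0 : Multiset (A × ℕ) → K}
    (hs0 : StringEq0 P η C0) (b : A) : C0 ((P, 0) ::ₘ {(b, 0)}) = 0 := by
  have hX : ∀ a b' : A, ({((b : A), (0 : ℕ))} : Multiset (A × ℕ)) ≠ {(a, 0), (b', 0)} := by
    intro a b' h
    have := congrArg Multiset.card h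
    simp at this
  rw [hs0.2 {(b, 0)} hX]
  simp [stringRHS]

variable (C0 : Multiset (A × ℕ) → K) (ηinv : A → A → K) (P : A)

theorem coeff_zero_uSeries {η : A → A → K} (hs0 : StringEq0 P η C0) (c : A) :
    MvPowerSeries.coeff 0 (uSeries C0 ηinv P c) = 0 := by
  rw [uSeries, map_sum]
  refine Finset.sum_eq_zero fun b _ => ?_
  rw [MvPowerSeries.coeff_smul, coeff_gen]
  have h2 : ({((P : A), (0 : ℕ)), (b, 0)} : Multiset (A × ℕ)) + Finsupp.toMultiset 0 =
      (P, 0) ::ₘ {(b, 0)} := by simp [Multiset.insert_eq_cons]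
  rw [h2, twopoint_eq_zero hs0 b]
  simp

/-- `S_N(X) = ∑_{b : Fin N → A} ⟨X τ_0(γ_{b₁})⋯τ_0(γ_{b_N})⟩ u^{b₁}⋯u^{b_N}`. -/
noncomputable def Scorr (N : ℕ) (X : Multiset (A × ℕ)) : MvPowerSeries (A × ℕ) K :=
  ∑ b : Fin N → A,
    C0 (X + Multiset.map (fun i => (b i, 0)) Finset.univ.val) •
      ∏ i, uSeries C0 ηinv P (b i)

theorem Scorr_zero (X : Multiset (A × ℕ)) :
    Scorr C0 ηinv P 0 X = C0 X • 1 := by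
  rw [Scorr, Fintype.sum_unique]
  simp

theorem Scorr_succ (N : ℕ) (X : Multiset (A × ℕ)) :
    Scorr C0 ηinv P (N + 1) X =
      ∑ c : A, uSeries C0 ηinv P c * Scorr C0 ηinv P N ((c, 0) ::ₘ X) := by
  rw [Scorr]
  rw [← Equiv.sum_comp (Fin.consEquiv (fun _ : Fin (N + 1) => A)) _]
  rw [Fintype.sum_prod_type]
  refine Finset.sum_congr rfl fun c _ => ?_
  rw [Scorr, Finset.mul_sum]
  refine Finset.sum_congr rfl fun b' _ => ?_
  have hmap : Multiset.map (fun i => ((Fin.consEquiv (fun _ : Fin (N + 1) => A)) (c, b') i, 0))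
        Finset.univ.val =
      (c, 0) ::ₘ Multiset.map (fun i : Fin N => (b' i, 0)) Finset.univ.val := by
    rw [multiset_map_univ_succ]
    simp [Fin.consEquiv]
  have hprod : (∏ i, uSeries C0 ηinv P ((Fin.consEquiv (fun _ : Fin (N + 1) => A)) (c, b') i)) =
      uSeries C0 ηinv P c * ∏ i : Fin N, uSeries C0 ηinv P (b' i) := by
    rw [Fin.prod_univ_succ]
    simp [Fin.consEquiv]
  rw [hmap, hprod, mul_smul_comm]
  congr 2
  rw [Multiset.add_cons, Multiset.cons_add]

theorem pderivPS_Scorr_zero (s : A × ℕ) (X : Multiset (A × ℕ)) :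
    pderivPS s (Scorr C0 ηinv P 0 X) = 0 := by
  rw [Scorr_zero, pderivPS_smul, pderivPS_one, smul_zero]

theorem pderivPS_Scorr_succ (s : A × ℕ) :
    ∀ (N : ℕ) (X : Multiset (A × ℕ)),
      pderivPS s (Scorr C0 ηinv P (N + 1) X) =
        (N + 1) • ∑ c : A,
          Scorr C0 ηinv P N ((c, 0) ::ₘ X) * pderivPS s (uSeries C0 ηinv P c) := by
  intro N
  induction N with
  | zero =>
    intro X
    rw [Scorr_succ, pderivPS_sum, one_nsmul]
    refine Finset.sum_congr rfl fun c _ => ?_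
    rw [pderivPS_mul, pderivPS_Scorr_zero, mul_zero, add_zero, mul_comm]
  | succ N ih =>
    intro X
    rw [Scorr_succ, pderivPS_sum]
    have step : ∀ c : A,
        pderivPS s (uSeries C0 ηinv P c * Scorr C0 ηinv P (N + 1) ((c, 0) ::ₘ X)) =
          Scorr C0 ηinv P (N + 1) ((c, 0) ::ₘ X) * pderivPS s (uSeries C0 ηinv P c) +
          uSeries C0 ηinv P c *
            ((N + 1) • ∑ e : A, Scorr C0 ηinv P N ((e, 0) ::ₘ (c, 0) ::ₘ X) *
              pderivPS s (uSeries C0 ηinv P e)) := by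
      intro c
      rw [pderivPS_mul, ih ((c, 0) ::ₘ X), mul_comm (pderivPS s (uSeries C0 ηinv P c))]
    rw [Finset.sum_congr rfl fun c _ => step c, Finset.sum_add_distrib]
    have h2 : ∑ c : A, uSeries C0 ηinv P c *
        ((N + 1) • ∑ e : A, Scorr C0 ηinv P N ((e, 0) ::ₘ (c, 0) ::ₘ X) *
          pderivPS s (uSeries C0 ηinv P e)) =
        (N + 1) • ∑ e : A, Scorr C0 ηinv P (N + 1) ((e, 0) ::ₘ X) *
          pderivPS s (uSeries C0 ηinv P e) := by
      simp only [Finset.smul_sum, Finset.mul_sum, mul_smul_comm]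
      rw [Finset.sum_comm]
      refine Finset.sum_congr rfl fun e _ => ?_
      rw [← Finset.smul_sum]
      congr 1
      rw [Scorr_succ, Finset.sum_mul]
      refine Finset.sum_congr rfl fun c _ => ?_
      rw [Multiset.cons_swap, mul_assoc]
    rw [h2]
    conv_rhs => rw [succ_nsmul]
    rw [add_comm]

/-- Truncated generating series. -/
noncomputable def Fcorr (M : ℕ) (X : Multiset (A × ℕ)) : MvPowerSeries (A × ℕ) K :=
  ∑ N ∈ Finset.range (M + 1), (N.factorial : ℚ)⁻¹ • Scorr C0 ηinv P N X

/-- Generating series with all orders. -/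
noncomputable def PhiX (X : Multiset (A × ℕ)) : MvPowerSeries (A × ℕ) K :=
  fun d => MvPowerSeries.coeff d (Fcorr C0 ηinv P (degd d) X)

theorem coeff_Scorr_eq_zero {η : A → A → K} (hs0 : StringEq0 P η C0)
    (N : ℕ) (X : Multiset (A × ℕ)) (d : (A × ℕ) →₀ ℕ) (hd : degd d < N) :
    MvPowerSeries.coeff d (Scorr C0 ηinv P N X) = 0 := by
  rw [Scorr, map_sum]
  refine Finset.sum_eq_zero fun b _ => ?_
  rw [MvPowerSeries.coeff_smul,
    coeff_prod_eq_zero N _ (fun i => coeff_zero_uSeries C0 ηinv P hs0 (b i)) d hd, mul_zero]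

theorem coeff_Fcorr_trunc {η : A → A → K} (hs0 : StringEq0 P η C0)
    (M : ℕ) (X : Multiset (A × ℕ)) (d : (A × ℕ) →₀ ℕ) (hd : degd d ≤ M) :
    MvPowerSeries.coeff d (Fcorr C0 ηinv P M X) = PhiX C0 ηinv P X d := by
  have : PhiX C0 ηinv P X d = MvPowerSeries.coeff d (Fcorr C0 ηinv P (degd d) X) := rfl
  rw [this, Fcorr, Fcorr, map_sum, map_sum]
  refine (Finset.sum_subset ?_ ?_).symm
  · exact Finset.range_subset_range.mpr (by omega)
  · intro N _ hN
    rw [Finset.mem_range, not_lt] at hN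
    rw [coeff_smul'PS, coeff_Scorr_eq_zero C0 ηinv P hs0 N X d (by omega), smul_zero]

theorem coeff_PhiX (X : Multiset (A × ℕ)) (d : (A × ℕ) →₀ ℕ) :
    MvPowerSeries.coeff d (PhiX C0 ηinv P X) =
      MvPowerSeries.coeff d (Fcorr C0 ηinv P (degd d) X) := rfl

theorem pderivPS_Fcorr (s : A × ℕ) (M : ℕ) (X : Multiset (A × ℕ)) :
    pderivPS s (Fcorr C0 ηinv P (M + 1) X) =
      ∑ c : A, Fcorr C0 ηinv P M ((c, 0) ::ₘ X) * pderivPS s (uSeries C0 ηinv P c) := by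
  rw [Fcorr, pderivPS_sum, Finset.sum_range_succ']
  have h0 : pderivPS s ((((0 : ℕ).factorial : ℚ))⁻¹ • Scorr C0 ηinv P 0 X) = 0 := by
    rw [pderivPS_smul, pderivPS_Scorr_zero, smul_zero]
  rw [h0, add_zero]
  have hterm : ∀ N : ℕ,
      pderivPS s (((N + 1).factorial : ℚ)⁻¹ • Scorr C0 ηinv P (N + 1) X) =
        (N.factorial : ℚ)⁻¹ • ∑ c : A,
          Scorr C0 ηinv P N ((c, 0) ::ₘ X) * pderivPS s (uSeries C0 ηinv P c) := by
    intro N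
    rw [pderivPS_smul, pderivPS_Scorr_succ]
    rw [← Nat.cast_smul_eq_nsmul ℚ (N + 1), smul_smul]
    congr 1
    rw [Nat.factorial_succ]
    have h1 : ((N + 1 : ℕ) : ℚ) ≠ 0 := by positivity
    have h2 : ((N.factorial : ℕ) : ℚ) ≠ 0 := Nat.cast_ne_zero.mpr (Nat.factorial_ne_zero _)
    push_cast
    field_simp
  rw [Finset.sum_congr rfl fun N _ => hterm N]
  simp only [Finset.smul_sum]
  rw [Finset.sum_comm]
  refine Finset.sum_congr rfl fun c _ => ?_
  rw [Fcorr, Finset.sum_mul]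
  refine Finset.sum_congr rfl fun N _ => ?_
  rw [smul_mul_assoc]

theorem pderivPS_uSeries (htrr : TRR0 ηinv C0) (b : A) (n : ℕ) (hn : 1 ≤ n) (c : A) :
    pderivPS (b, n) (uSeries C0 ηinv P c) =
      ∑ c' : A, ∑ e' : A, ηinv c' e' •
        (gen C0 {(b, n - 1), (c', 0)} * pderivPS (e', 0) (uSeries C0 ηinv P c)) := by
  have hu : ∀ s : A × ℕ, pderivPS s (uSeries C0 ηinv P c) =
      ∑ e : A, ηinv c e • gen C0 (s ::ₘ {(P, 0), (e, 0)}) := by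
    intro s
    rw [uSeries, pderivPS_sum]
    refine Finset.sum_congr rfl fun e _ => ?_
    rw [pderivPS_smul, pderivPS_gen]
  have hswap : ∀ s : A × ℕ, ∀ e : A,
      (s ::ₘ ({(P, 0), (e, 0)} : Multiset (A × ℕ))) = {s, (e, 0), (P, 0)} := by
    intro s e
    show s ::ₘ (P, 0) ::ₘ (e, 0) ::ₘ 0 = s ::ₘ (e, 0) ::ₘ (P, 0) ::ₘ 0
    rw [Multiset.cons_swap (P, 0) (e, 0)]
  rw [hu (b, n)]
  have htrr' : ∀ e : A, gen C0 ((b, n) ::ₘ ({(P, 0), (e, 0)} : Multiset (A × ℕ))) =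
      ∑ c' : A, ∑ e' : A, ηinv c' e' •
        (gen C0 {(b, n - 1), (c', 0)} * gen C0 {(e', 0), (e, 0), (P, 0)}) := by
    intro e
    rw [hswap (b, n) e]
    exact htrr n 0 0 b e P hn
  rw [Finset.sum_congr rfl fun e _ => congrArg _ (htrr' e)]
  have hrhs : ∀ c' e' : A,
      pderivPS (e', 0) (uSeries C0 ηinv P c) =
        ∑ e : A, ηinv c e • gen C0 {(e', 0), (e, 0), (P, 0)} := by
    intro c' e'
    rw [hu (e', 0)]
    exact Finset.sum_congr rfl fun e _ => by rw [hswap (e', 0) e]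
  rw [Finset.sum_congr rfl fun c' _ => Finset.sum_congr rfl fun e' _ =>
    congrArg _ (congrArg _ (hrhs c' e'))]
  simp only [Finset.smul_sum, Finset.mul_sum, mul_smul_comm, smul_smul]
  rw [Finset.sum_comm]
  refine Finset.sum_congr rfl fun c' _ => ?_
  rw [Finset.sum_comm]
  refine Finset.sum_congr rfl fun e' _ => Finset.sum_congr rfl fun e _ => ?_
  rw [mul_comm]

theorem pderivPS_Fcorr_system (htrr : TRR0 ηinv C0) (b : A) (n : ℕ) (hn : 1 ≤ n)
    (M : ℕ) (X : Multiset (A × ℕ)) :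
    pderivPS (b, n) (Fcorr C0 ηinv P (M + 1) X) =
      ∑ c : A, ∑ e : A, ηinv c e •
        (gen C0 {(b, n - 1), (c, 0)} *
          pderivPS (e, 0) (Fcorr C0 ηinv P (M + 1) X)) := by
  rw [pderivPS_Fcorr]
  rw [Finset.sum_congr rfl fun a _ =>
    congrArg _ (pderivPS_uSeries C0 ηinv P htrr b n hn a)]
  rw [Finset.sum_congr rfl fun c _ => Finset.sum_congr rfl fun e _ =>
    congrArg _ (congrArg _ (pderivPS_Fcorr C0 ηinv P (e, 0) M X))]
  simp only [Finset.mul_sum, Finset.smul_sum, mul_smul_comm]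
  rw [Finset.sum_comm]
  refine Finset.sum_congr rfl fun c _ => ?_
  rw [Finset.sum_comm]
  refine Finset.sum_congr rfl fun e _ => Finset.sum_congr rfl fun a _ => ?_
  congr 1
  rw [mul_left_comm]

theorem coeff_mul_congr_right (G f g : MvPowerSeries (A × ℕ) K) (d : (A × ℕ) →₀ ℕ)
    (h : ∀ d' : (A × ℕ) →₀ ℕ, d' ≤ d →
      MvPowerSeries.coeff d' f = MvPowerSeries.coeff d' g) :
    MvPowerSeries.coeff d (G * f) = MvPowerSeries.coeff d (G * g) := by
  classical
  rw [MvPowerSeries.coeff_mul, MvPowerSeries.coeff_mul]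
  refine Finset.sum_congr rfl fun p hp => ?_
  rw [Finset.HasAntidiagonal.mem_antidiagonal] at hp
  rw [h p.2 (hp ▸ le_add_self)]

end DW


/-- Assuming the string equation and the genus-0 topological recursion relation, the
series `Φ` satisfies the same first-order system as
`⟨⟨τ_{k₁}(γ_{a₁})τ_{k₂}(γ_{a₂})⟩⟩₀`:
`∂Φ/∂t^b_n = ∑_{c,d} ⟨⟨τ_{n−1}(γ_b)γ_c⟩⟩₀ η^{cd} ∂Φ/∂t^d_0` for `n ≥ 1`. -/
theorem Phi_first_order_system
    {K : Type*} [CommRing K] [Algebra ℚ K] {A : Type*} [Fintype A] [DecidableEq A]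
    (P : A) (η ηinv : A → A → K)
    (hsymm : ∀ a b : A, η a b = η b a)
    (hinv : ∀ a b : A, ∑ c : A, η a c * ηinv c b = if a = b then 1 else 0)
    (hinv' : ∀ a b : A, ∑ c : A, ηinv a c * η c b = if a = b then 1 else 0)
    (C0 C1 : Multiset (A × ℕ) → K)
    (hs0 : StringEq0 P η C0) (hs1 : StringEq1 P C1)
    (htrr : TRR0 ηinv C0)
    (k1 k2 : ℕ) (a1 a2 : A) :
    ∀ (b : A) (n : ℕ), 1 ≤ n →
      pderivPS (b, n) (PhiDW C0 ηinv P k1 k2 a1 a2) =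
        ∑ c : A, ∑ e : A, ηinv c e •
          (gen C0 {(b, n - 1), (c, 0)} *
            pderivPS (e, 0) (PhiDW C0 ηinv P k1 k2 a1 a2)) := by
  intro b n hn
  have hPhi : PhiDW C0 ηinv P k1 k2 a1 a2 =
      PhiX C0 ηinv P {(a1, k1), (a2, k2)} := rfl
  rw [hPhi]
  set X₀ : Multiset (A × ℕ) := {(a1, k1), (a2, k2)} with hX₀
  ext d
  have hP : ∀ (s : A × ℕ) (d' : (A × ℕ) →₀ ℕ), degd d' ≤ degd d →
      MvPowerSeries.coeff d' (pderivPS s (PhiX C0 ηinv P X₀)) =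
      MvPowerSeries.coeff d' (pderivPS s (Fcorr C0 ηinv P (degd d + 1) X₀)) := by
    intro s d' hd'
    rw [coeff_pderivPS, coeff_pderivPS]
    congr 1
    rw [MvPowerSeries.coeff_apply,
      coeff_Fcorr_trunc C0 ηinv P hs0 (degd d + 1) X₀ (d' + Finsupp.single s 1)
        (by rw [degd_add, degd_single]; omega)]
  rw [hP (b, n) d le_rfl]
  rw [pderivPS_Fcorr_system C0 ηinv P htrr b n hn (degd d) X₀]
  rw [map_sum, map_sum]
  refine Finset.sum_congr rfl fun c _ => ?_
  rw [map_sum, map_sum]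
  refine Finset.sum_congr rfl fun e _ => ?_
  rw [coeff_smul'PS, coeff_smul'PS]
  congr 1
  exact coeff_mul_congr_right _ _ _ d fun d' hd' => (hP (e, 0) d' (degd_mono hd')).symm
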